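/- arXiv:1008.1519 — 5 statements merged into one kernel-verified Lean document; each statement's English description precedes it below -/
import Mathlib

section
/- For fixed s in the upper half plane, the function z ↦ |s−z|²/(Im(s)·Im(z)) on the upper half plane is strictly convex (as a function of (Re z, Im z) ∈ ℝ × (0,∞)). -/
/-!
The convexity defect `t f p + (1 - t) f q - f (t p + (1 - t) q)` of
`f (x, y) = ((a - x)² + (b - y)²) / (b y)` is an explicit rational function: `t (1 - t)` times a sum
of two squares over a positive denominator. The first square vanishes only when `y₁ = y₂`, and then
the second only when `x₁ = x₂`.
-/

theorem sq_add_sq_div_mul_convexity_gap (a b x₁ y₁ x₂ y₂ t : ℝ) (hb : b ≠ 0) (hy₁ : y₁ ≠ 0)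
    (hy₂ : y₂ ≠ 0) (hy : t * y₁ + (1 - t) * y₂ ≠ 0) :
    t * (((a - x₁) ^ 2 + (b - y₁) ^ 2) / (b * y₁))
        + (1 - t) * (((a - x₂) ^ 2 + (b - y₂) ^ 2) / (b * y₂))
        - ((a - (t * x₁ + (1 - t) * x₂)) ^ 2 + (b - (t * y₁ + (1 - t) * y₂)) ^ 2)
          / (b * (t * y₁ + (1 - t) * y₂))
      = t * (1 - t) * (b ^ 2 * (y₁ - y₂) ^ 2 + ((a - x₁) * y₂ - (a - x₂) * y₁) ^ 2)
          / (b * y₁ * y₂ * (t * y₁ + (1 - t) * y₂)) := by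
  field_simp
  ring

theorem sq_mul_sq_sub_add_sq_pos {a b x₁ y₁ x₂ y₂ : ℝ} (hb : b ≠ 0) (hy₁ : y₁ ≠ 0)
    (hne : (x₁, y₁) ≠ (x₂, y₂)) :
    0 < b ^ 2 * (y₁ - y₂) ^ 2 + ((a - x₁) * y₂ - (a - x₂) * y₁) ^ 2 := by
  rcases eq_or_ne y₁ y₂ with rfl | hy
  · have hx : x₂ - x₁ ≠ 0 := sub_ne_zero.2 fun h => hne (by rw [h])
    have : (a - x₁) * y₁ - (a - x₂) * y₁ = y₁ * (x₂ - x₁) := by ring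
    rw [this]
    exact add_pos_of_nonneg_of_pos (by positivity) (pow_two_pos_of_ne_zero (mul_ne_zero hy₁ hx))
  · exact add_pos_of_pos_of_nonneg
      (mul_pos (pow_two_pos_of_ne_zero hb) (pow_two_pos_of_ne_zero (sub_ne_zero.2 hy)))
      (sq_nonneg _)

theorem strictConvexOn_sq_add_sq_div_mul (a : ℝ) {b : ℝ} (hb : 0 < b) :
    StrictConvexOn ℝ {p : ℝ × ℝ | 0 < p.2}
      (fun p : ℝ × ℝ => ((a - p.1) ^ 2 + (b - p.2) ^ 2) / (b * p.2)) := by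
  refine ⟨convex_halfSpace_gt (LinearMap.snd ℝ ℝ ℝ).isLinear 0, ?_⟩
  rintro ⟨x₁, y₁⟩ (hy₁ : 0 < y₁) ⟨x₂, y₂⟩ (hy₂ : 0 < y₂) hne t u ht hu htu
  obtain rfl : u = 1 - t := by linarith
  have hy : 0 < t * y₁ + (1 - t) * y₂ := by positivity
  have hN := sq_mul_sq_sub_add_sq_pos (a := a) hb.ne' hy₁.ne' hne
  have hgap := sq_add_sq_div_mul_convexity_gap a b x₁ y₁ x₂ y₂ t hb.ne' hy₁.ne' hy₂.ne' hy.ne'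
  simp only [Prod.smul_mk, Prod.mk_add_mk, smul_eq_mul]
  rw [← sub_pos, hgap]
  positivity

theorem stmt5 (s : ℂ) (hs : 0 < s.im) :
    StrictConvexOn ℝ {p : ℝ × ℝ | 0 < p.2}
      (fun p : ℝ × ℝ =>
        ((s.re - p.1) ^ 2 + (s.im - p.2) ^ 2) / (s.im * p.2)) :=
  strictConvexOn_sq_add_sq_div_mul s.re hs
end

section
/- Let s be in the upper half plane and z₁,…,z_M in the upper half plane. Then c(s, (z₁+⋯+z_M)/M) ≤ (1/M)·∑_{i=1}^M c(s, z_i), where c(s,z) = |s−z|²/(Im(s)·Im(z)). Moreover c(M·s, z₁+⋯+z_M) = c(s, (z₁+⋯+z_M)/M). -/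
open Finset

/-!
Scaling both points by a nonzero real leaves the cost unchanged, so
`c(s, Z / M) = c(M s, Z)` with `Z = z₁ + ⋯ + z_M`. Now `M s - Z = ∑ (s - zᵢ)` and
`Im Z = ∑ Im zᵢ`, and Sedrakyan's form of Cauchy–Schwarz,
`‖∑ wᵢ‖² / ∑ bᵢ ≤ ∑ ‖wᵢ‖² / bᵢ`, gives the averaged bound.
-/

theorem norm_sum_sq_div_sum_le {ι E : Type*} [SeminormedAddCommGroup E] (t : Finset ι)
    (w : ι → E) {b : ι → ℝ} (hb : ∀ i ∈ t, 0 < b i) :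
    ‖∑ i ∈ t, w i‖ ^ 2 / ∑ i ∈ t, b i ≤ ∑ i ∈ t, ‖w i‖ ^ 2 / b i := by
  have hb_sum : 0 ≤ ∑ i ∈ t, b i := sum_nonneg fun i hi => (hb i hi).le
  calc ‖∑ i ∈ t, w i‖ ^ 2 / ∑ i ∈ t, b i
      ≤ (∑ i ∈ t, ‖w i‖) ^ 2 / ∑ i ∈ t, b i := by gcongr; exact norm_sum_le t w
    _ ≤ ∑ i ∈ t, ‖w i‖ ^ 2 / b i := sq_sum_div_le_sum_sq_div t _ hb

noncomputable def hypCost (a b : ℂ) : ℝ := ‖a - b‖ ^ 2 / (a.im * b.im)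

theorem hypCost_ofReal_mul {r : ℝ} (hr : r ≠ 0) (a b : ℂ) :
    hypCost (r * a) (r * b) = hypCost a b := by
  have hr' : (0 : ℝ) < r ^ 2 := by positivity
  simp only [hypCost, ← mul_sub, norm_mul, Complex.norm_real, Real.norm_eq_abs, mul_pow, sq_abs,
    Complex.im_ofReal_mul]
  rw [mul_mul_mul_comm, ← sq, mul_div_mul_left _ _ hr'.ne']

theorem hypCost_card_mul_sum_le {ι : Type*} (t : Finset ι) {s : ℂ} (hs : 0 < s.im)
    (z : ι → ℂ) (hz : ∀ i ∈ t, 0 < (z i).im) :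
    hypCost (#t * s) (∑ i ∈ t, z i) ≤ (1 / #t) * ∑ i ∈ t, hypCost s (z i) := by
  have hdiff : (#t : ℂ) * s - ∑ i ∈ t, z i = ∑ i ∈ t, (s - z i) := by
    rw [sum_sub_distrib, sum_const, nsmul_eq_mul]
  have him : ((#t : ℂ) * s).im * (∑ i ∈ t, z i).im = (#t * s.im) * ∑ i ∈ t, (z i).im := by
    simp [Complex.im_sum]
  calc hypCost (#t * s) (∑ i ∈ t, z i)
      = (‖∑ i ∈ t, (s - z i)‖ ^ 2 / ∑ i ∈ t, (z i).im) / (#t * s.im) := by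
        rw [hypCost, hdiff, him, div_div, mul_comm]
    _ ≤ (∑ i ∈ t, ‖s - z i‖ ^ 2 / (z i).im) / (#t * s.im) := by
        gcongr
        exact norm_sum_sq_div_sum_le t _ hz
    _ = (1 / #t) * ∑ i ∈ t, hypCost s (z i) := by
        simp only [hypCost, sum_div, mul_sum]
        exact sum_congr rfl fun i _ => by ring

theorem stmt8 (M : ℕ) (hM : 1 ≤ M) (s : ℂ) (hs : 0 < s.im)
    (z : Fin M → ℂ) (hz : ∀ i, 0 < (z i).im) :
    (fun a b : ℂ => ‖a - b‖ ^ 2 / (a.im * b.im)) s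
        ((∑ i, z i) / M) ≤
      (1 / M : ℝ) * ∑ i, ‖s - z i‖ ^ 2 / (s.im * (z i).im) ∧
    ‖(M : ℂ) * s - ∑ i, z i‖ ^ 2 / (((M : ℂ) * s).im * (∑ i, z i).im) =
      ‖s - (∑ i, z i) / M‖ ^ 2 / (s.im * ((∑ i, z i) / M).im) := by
  have hM0 : (M : ℝ) ≠ 0 := by positivity
  have hscale : hypCost (M * s) (∑ i, z i) = hypCost s ((∑ i, z i) / M) := by
    have := hypCost_ofReal_mul hM0 s ((∑ i, z i) / M)
    rwa [Complex.ofReal_natCast, mul_div_cancel₀ _ (by exact_mod_cast hM0)] at this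
  refine ⟨?_, hscale⟩
  have := hypCost_card_mul_sum_le univ hs z fun i _ => hz i
  rwa [card_univ, Fintype.card_fin, hscale] at this
end

section
/- Let M ≥ 2, let λ ∈ ℝ with |λ| < 2√M, and let z_λ be the fixed point of z ↦ −1/(Mz+λ) in the upper half plane. Define w(z) = |z − z_λ|²/(Im(z)·Im(z_λ)) and φ(z₁,…,z_M) = −1/(z₁+⋯+z_M+λ). Then for all z₁,…,z_M in the upper half plane, not all equal to z_λ, M·w(φ(z₁,…,z_M)) ≤ w(z₁) + ⋯ + w(z_M). -/
/-!
The point `z_λ` is the root in the upper half plane of `M z² + λ z + 1 = 0`, so `|z_λ|² = 1/M`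
and, writing `S = z₁ + ⋯ + z_M`, one has `φ(z) − z_λ = −z_λ (S − M z_λ) / (S + λ)`. Since moreover
`Im φ(z) = Im S / |S + λ|²`, the factors `|S + λ|²` cancel and
`M w(φ(z)) = |S − M z_λ|² / (Im S · Im z_λ)`. The bound then follows from the triangle inequality
`|S − M z_λ| ≤ ∑ |z_i − z_λ|` and the Cauchy–Schwarz inequality in Engel form
`(∑ a_i)² / ∑ b_i ≤ ∑ a_i² / b_i`.
-/

open Complex

/-- For points of the upper half plane this is `2 (cosh d(u, ζ) − 1)`, `d` the hyperbolic
distance (see `UpperHalfPlane.cosh_dist`). -/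
noncomputable def hyperbolicGap (ζ u : ℂ) : ℝ := ‖u - ζ‖ ^ 2 / (u.im * ζ.im)

theorem sq_norm_sum_sub_div_le_sum_hyperbolicGap {ι : Type*} (s : Finset ι) (z : ι → ℂ)
    (hz : ∀ i ∈ s, 0 < (z i).im) {ζ : ℂ} (hζ : 0 ≤ ζ.im) :
    ‖∑ i ∈ s, z i - s.card • ζ‖ ^ 2 / ((∑ i ∈ s, z i).im * ζ.im) ≤
      ∑ i ∈ s, hyperbolicGap ζ (z i) := by
  have htriangle : ‖∑ i ∈ s, z i - s.card • ζ‖ ≤ ∑ i ∈ s, ‖z i - ζ‖ := by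
    rw [← Finset.sum_const, ← Finset.sum_sub_distrib]
    exact norm_sum_le _ _
  simp only [hyperbolicGap, ← div_div, ← Finset.sum_div, im_sum]
  gcongr
  calc ‖∑ i ∈ s, z i - s.card • ζ‖ ^ 2 / ∑ i ∈ s, (z i).im
      ≤ (∑ i ∈ s, ‖z i - ζ‖) ^ 2 / ∑ i ∈ s, (z i).im := by
        gcongr
        exact Finset.sum_nonneg fun i hi => (hz i hi).le
    _ ≤ ∑ i ∈ s, ‖z i - ζ‖ ^ 2 / (z i).im := Finset.sq_sum_div_le_sum_sq_div _ _ hz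

section Quadratic

variable {c lam : ℝ} {ζ : ℂ}

theorem mul_normSq_eq_one_of_quadratic (hζ : c * ζ ^ 2 + lam * ζ + 1 = 0) (him : ζ.im ≠ 0) :
    c * normSq ζ = 1 := by
  have hre := congrArg re hζ
  have him' := congrArg im hζ
  simp only [add_re, add_im, mul_re, mul_im, ofReal_re, ofReal_im, sq, one_re, one_im,
    zero_re, zero_im] at hre him'
  have hlam : lam = -2 * c * ζ.re := by
    apply mul_right_cancel₀ him
    linarith
  rw [normSq_apply]
  subst hlam
  linarith

theorem neg_one_div_sub_of_quadratic (hζ : c * ζ ^ 2 + lam * ζ + 1 = 0) {S : ℂ}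
    (hS : S + lam ≠ 0) : -1 / (S + lam) - ζ = -(ζ * (S - c * ζ)) / (S + lam) := by
  field_simp
  linear_combination -hζ

theorem mul_hyperbolicGap_neg_one_div (hζ : c * ζ ^ 2 + lam * ζ + 1 = 0) (hζim : 0 < ζ.im)
    {S : ℂ} (hS : 0 < S.im) :
    c * hyperbolicGap ζ (-1 / (S + lam)) = ‖S - c * ζ‖ ^ 2 / (S.im * ζ.im) := by
  have hSlam : S + lam ≠ 0 := fun h => by
    have := congrArg im h
    simp only [add_im, ofReal_im, add_zero, zero_im] at this
    exact hS.ne' this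
  have hNpos : 0 < normSq (S + lam) := normSq_pos.mpr hSlam
  have him : (-1 / (S + lam)).im = S.im / normSq (S + lam) := by
    rw [div_eq_mul_inv, neg_one_mul, neg_im, inv_im, add_im, ofReal_im, add_zero, neg_div,
      neg_neg]
  have hnorm : ‖-1 / (S + lam) - ζ‖ ^ 2 = normSq ζ * ‖S - c * ζ‖ ^ 2 / normSq (S + lam) := by
    rw [neg_one_div_sub_of_quadratic hζ hSlam, norm_div, norm_neg, norm_mul, div_pow, mul_pow,
      Complex.sq_norm, Complex.sq_norm (S + lam)]
  have hc := mul_normSq_eq_one_of_quadratic hζ hζim.ne'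
  rw [hyperbolicGap, hnorm, him]
  field_simp
  linear_combination ‖S - c * ζ‖ ^ 2 * hc

end Quadratic

noncomputable def upperRoot (c lam : ℝ) : ℂ :=
  -(lam : ℂ) / (2 * c) + (I / (2 * c)) * (Real.sqrt (4 * c - lam ^ 2) : ℂ)

section UpperRoot

variable {c lam : ℝ}

theorem upperRoot_im_pos (hc : 0 < c) (hlam : lam ^ 2 < 4 * c) : 0 < (upperRoot c lam).im := by
  have him : (upperRoot c lam).im = Real.sqrt (4 * c - lam ^ 2) / (2 * c) := by
    rw [upperRoot, div_mul_eq_mul_div, ← ofReal_ofNat, ← ofReal_mul, add_im, div_ofReal_im,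
      div_ofReal_im, mul_comm I, mul_I_im, ofReal_re, neg_im, ofReal_im]
    ring
  rw [him]
  have := Real.sqrt_pos.mpr (sub_pos.mpr hlam)
  positivity

theorem upperRoot_isRoot (hc : 0 < c) (hlam : lam ^ 2 < 4 * c) :
    c * upperRoot c lam ^ 2 + lam * upperRoot c lam + 1 = 0 := by
  have hsq : (Real.sqrt (4 * c - lam ^ 2) : ℂ) ^ 2 = 4 * c - lam ^ 2 := by
    rw [← ofReal_pow, Real.sq_sqrt (sub_pos.mpr hlam).le]
    push_cast
    ring
  have hc' : (c : ℂ) ≠ 0 := ofReal_ne_zero.mpr hc.ne'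
  rw [upperRoot]
  field_simp
  linear_combination (Real.sqrt (4 * c - lam ^ 2) : ℂ) ^ 2 * I_sq - hsq

end UpperRoot

theorem stmt9_general (M : ℕ) (lam : ℝ) (hlam : |lam| < 2 * Real.sqrt M)
    (z : Fin M → ℂ) (hz : ∀ i, 0 < (z i).im) :
    let zlam : ℂ := -(lam : ℂ) / (2 * M) +
      (Complex.I / (2 * M)) * (Real.sqrt (4 * M - lam ^ 2) : ℂ)
    let w : ℂ → ℝ := fun u => ‖u - zlam‖ ^ 2 / (u.im * zlam.im)
    (M : ℝ) * w (-1 / (∑ i, z i + lam)) ≤ ∑ i, w (z i) := by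
  intro zlam w
  have hM : (0 : ℝ) < M := Real.sqrt_pos.mp (by linarith [abs_nonneg lam])
  have hlam_sq : lam ^ 2 < 4 * M := by
    have := pow_lt_pow_left₀ hlam (abs_nonneg lam) two_ne_zero
    rwa [sq_abs, mul_pow, Real.sq_sqrt hM.le, show (2 : ℝ) ^ 2 = 4 by norm_num] at this
  have hzlam : zlam = upperRoot M lam := by simp [zlam, upperRoot]
  have : Nonempty (Fin M) := ⟨⟨0, by exact_mod_cast hM⟩⟩
  have hS : 0 < (∑ i, z i).im := by
    rw [im_sum]
    exact Finset.sum_pos (fun i _ => hz i) Finset.univ_nonempty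
  change (M : ℝ) * hyperbolicGap zlam _ ≤ ∑ i, hyperbolicGap zlam (z i)
  rw [hzlam, mul_hyperbolicGap_neg_one_div (upperRoot_isRoot hM hlam_sq)
    (upperRoot_im_pos hM hlam_sq) hS]
  simpa using sq_norm_sum_sub_div_le_sum_hyperbolicGap Finset.univ z (fun i _ => hz i)
    (upperRoot_im_pos hM hlam_sq).le

theorem stmt9 (M : ℕ) (hM : 2 ≤ M) (lam : ℝ) (hlam : |lam| < 2 * Real.sqrt M)
    (z : Fin M → ℂ) (hz : ∀ i, 0 < (z i).im)
    (hne : ¬ ∀ i, z i = -(lam : ℂ) / (2 * M) +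
      (Complex.I / (2 * M)) * (Real.sqrt (4 * M - lam ^ 2) : ℂ)) :
    let zlam : ℂ := -(lam : ℂ) / (2 * M) +
      (Complex.I / (2 * M)) * (Real.sqrt (4 * M - lam ^ 2) : ℂ)
    let w : ℂ → ℝ := fun u => ‖u - zlam‖ ^ 2 / (u.im * zlam.im)
    (M : ℝ) * w (-1 / (∑ i, z i + lam)) ≤ ∑ i, w (z i) :=
  stmt9_general M lam hlam z hz
end

section
/- Let M ≥ 2, λ ∈ ℂ with Im(λ) > 0 and Re(λ) ∈ [−E,E] for some 0 < E < 2√M, and let z_λ ∈ ℍ be the unique fixed point in the upper half plane of z ↦ −1/(Mz+λ). For z₁,…,z_M in the upper half plane not all equal to z_λ, define μ₂ = M·w(φ(z₁,…,z_M))/(w(z₁)+⋯+w(z_M)) with w(z) = |z−z_λ|²/(Im(z)·Im(z_λ)) and φ(z₁,…,z_M) = −1/(z₁+⋯+z_M+λ). Then μ₂ < 1. -/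
/-!
Write `q = ∑ zᵢ + λ` and `p = M z_λ + λ`, so that `φ(z) = -1/q` and `z_λ = -1/p`. The inversion
`u ↦ -1/u` preserves `|u - v|² / (Im u · Im v)`, hence `w(φ(z)) = |∑ (zᵢ - z_λ)|² / (Im q · Im p)`.
By Cauchy–Schwarz `|∑ (zᵢ - z_λ)|² ≤ (∑ |zᵢ - z_λ|² / Im zᵢ) · ∑ Im zᵢ`, and the first factor is
`Im z_λ · ∑ w(zᵢ)`. So `μ₂ ≤ M T b / ((T + a)(M b + a))` with `T = ∑ Im zᵢ`, `a = Im λ`,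
`b = Im z_λ`, which is `< 1` because `a > 0`.
-/

open Finset

theorem Complex.norm_sub_sq_div_im_mul_im_neg_inv (u v : ℂ) :
    ‖-1 / u - -1 / v‖ ^ 2 / ((-1 / u).im * (-1 / v).im) = ‖u - v‖ ^ 2 / (u.im * v.im) := by
  rcases eq_or_ne u 0 with rfl | hu
  · simp
  rcases eq_or_ne v 0 with rfl | hv
  · simp
  have hdiff : -1 / u - -1 / v = (u - v) / (u * v) := by field_simp; ring
  have him : ∀ x : ℂ, (-1 / x).im = x.im / Complex.normSq x := fun x => by
    rw [neg_div, Complex.neg_im, one_div, Complex.inv_im, neg_div, neg_neg]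
  rw [hdiff, him, him, norm_div, norm_mul, div_pow, mul_pow, Complex.sq_norm u,
    Complex.sq_norm v]
  have := Complex.normSq_pos.mpr hu
  have := Complex.normSq_pos.mpr hv
  field_simp

theorem norm_sum_sq_le_sum_norm_sq_div_mul_sum {ι E : Type*} [SeminormedAddCommGroup E]
    (s : Finset ι) (v : ι → E) {g : ι → ℝ} (hg : ∀ i ∈ s, 0 < g i) :
    ‖∑ i ∈ s, v i‖ ^ 2 ≤ (∑ i ∈ s, ‖v i‖ ^ 2 / g i) * ∑ i ∈ s, g i := by
  rcases s.eq_empty_or_nonempty with rfl | hs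
  · simp
  have hpos : 0 < ∑ i ∈ s, g i := sum_pos hg hs
  calc ‖∑ i ∈ s, v i‖ ^ 2 ≤ (∑ i ∈ s, ‖v i‖) ^ 2 := by gcongr; exact norm_sum_le s v
    _ ≤ (∑ i ∈ s, ‖v i‖ ^ 2 / g i) * ∑ i ∈ s, g i :=
      (div_le_iff₀ hpos).mp (sq_sum_div_le_sum_sq_div s _ hg)

theorem mul_div_div_lt_one {M X A T a b : ℝ} (hM : 0 ≤ M) (hA : 0 < A) (hT : 0 ≤ T)
    (ha : 0 < a) (hb : 0 < b) (hX : X ≤ A * T) :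
    M * (X / ((T + a) * (M * b + a))) / (A / b) < 1 := by
  rw [div_lt_one (by positivity), ← mul_div_assoc, div_lt_div_iff₀ (by positivity) hb]
  nlinarith [mul_le_mul_of_nonneg_right hX (mul_nonneg hM hb.le), mul_pos hA ha,
    mul_nonneg hA.le hT, mul_nonneg (mul_nonneg hA.le hM) hb.le]

theorem stmt10_general (M : ℕ)
    (lam : ℂ) (hlam : 0 < lam.im)
    (zlam : ℂ) (hzlam : 0 < zlam.im)
    (hfix : zlam = -1 / ((M : ℂ) * zlam + lam))
    (z : Fin M → ℂ) (hz : ∀ i, 0 < (z i).im)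
    (hne : ¬ ∀ i, z i = zlam) :
    let w : ℂ → ℝ := fun u => ‖u - zlam‖ ^ 2 / (u.im * zlam.im)
    (M : ℝ) * w (-1 / (∑ i, z i + lam)) / (∑ i, w (z i)) < 1 := by
  intro w
  obtain ⟨j, hj⟩ := not_forall.mp hne
  set A := ∑ i, ‖z i - zlam‖ ^ 2 / (z i).im
  have hA : 0 < A := sum_pos' (fun i _ => div_nonneg (sq_nonneg _) (hz i).le)
    ⟨j, mem_univ j, div_pos (pow_pos (norm_pos_iff.mpr (sub_ne_zero.mpr hj)) 2) (hz j)⟩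
  have hw_phi : w (-1 / (∑ i, z i + lam)) = ‖∑ i, (z i - zlam)‖ ^ 2 /
      ((∑ i, (z i).im + lam.im) * (M * zlam.im + lam.im)) := by
    have h := Complex.norm_sub_sq_div_im_mul_im_neg_inv (∑ i, z i + lam) (M * zlam + lam)
    rw [← hfix] at h
    simp only [w, h, sum_sub_distrib, sum_const, card_univ, Fintype.card_fin, nsmul_eq_mul,
      Complex.add_im, Complex.im_sum, Complex.mul_im, Complex.natCast_re, Complex.natCast_im,
      zero_mul, add_zero]
    ring_nf
  have hw_sum : ∑ i, w (z i) = A / zlam.im := by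
    simp only [w, A, sum_div, div_div]
  rw [hw_phi, hw_sum]
  exact mul_div_div_lt_one M.cast_nonneg hA (sum_nonneg fun i _ => (hz i).le) hlam hzlam
    (by simpa only [Complex.im_sum] using
      norm_sum_sq_le_sum_norm_sq_div_mul_sum univ (fun i => z i - zlam) (fun i _ => hz i))

theorem stmt10 (M : ℕ) (hM : 2 ≤ M) (E : ℝ) (hE0 : 0 < E)
    (hE : E < 2 * Real.sqrt M)
    (lam : ℂ) (hlam : 0 < lam.im) (hre : lam.re ∈ Set.Icc (-E) E)
    (zlam : ℂ) (hzlam : 0 < zlam.im)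
    (hfix : zlam = -1 / ((M : ℂ) * zlam + lam))
    (z : Fin M → ℂ) (hz : ∀ i, 0 < (z i).im)
    (hne : ¬ ∀ i, z i = zlam) :
    let w : ℂ → ℝ := fun u => ‖u - zlam‖ ^ 2 / (u.im * zlam.im)
    (M : ℝ) * w (-1 / (∑ i, z i + lam)) / (∑ i, w (z i)) < 1 :=
  stmt10_general M lam hlam zlam hzlam hfix z hz hne
end

section
/- Let M ≥ 2, λ ∈ ℂ with Im(λ) > 0 and Re(λ) ∈ [−E,E], 0 < E < 2√M, and z_λ the fixed point of z ↦ −1/(Mz+λ) in ℍ with w(z) = |z−z_λ|²/(Im(z)Im(z_λ)). Then for z₁,…,z_M ∈ ℍ, w(φ(z₁,…,z_M,0,λ)) ≤ w((z₁+⋯+z_M)/M) where φ(z₁,…,z_M,0,λ) = −1/(z₁+⋯+z_M+λ). Equivalently, the hyperbolic distance from φ(z₁,…,z_M,0,λ) to z_λ is at most the hyperbolic distance from (z₁+⋯+z_M)/M to z_λ. -/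
/-!
Write `S = z₁ + ⋯ + z_M` and `B = M z_λ + λ`, so that `z_λ = -1/B`. The quantity
`w(u, v) = |u - v|² / (Im u · Im v)` is invariant under `u ↦ -1/u` and under real scaling,
hence `w(-1/(S + λ), z_λ) = w(S + λ, M z_λ + λ)` and `w(S/M, z_λ) = w(S, M z_λ)`.
Translating both points by `λ` with `Im λ > 0` only enlarges the denominator.
-/

open Complex

/-- Equal to `2 (cosh d - 1)` for the hyperbolic distance `d` on the upper half-plane,
see `UpperHalfPlane.cosh_dist`. -/
noncomputable def hypWeight (u v : ℂ) : ℝ := ‖u - v‖ ^ 2 / (u.im * v.im)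

lemma im_neg_one_div (a : ℂ) : (-1 / a).im = a.im / normSq a := by
  rw [neg_div, neg_im, one_div, inv_im, neg_div, neg_neg]

lemma hypWeight_neg_one_div (a b : ℂ) : hypWeight (-1 / a) (-1 / b) = hypWeight a b := by
  rcases eq_or_ne a 0 with rfl | ha
  · simp [hypWeight]
  rcases eq_or_ne b 0 with rfl | hb
  · simp [hypWeight]
  have hdiff : -1 / a - -1 / b = (a - b) / (a * b) := by field_simp; ring
  have hna : normSq a ≠ 0 := normSq_eq_zero.not.mpr ha
  have hnb : normSq b ≠ 0 := normSq_eq_zero.not.mpr hb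
  rw [hypWeight, hypWeight, hdiff, im_neg_one_div, im_neg_one_div, norm_div, norm_mul, div_pow,
    mul_pow]
  simp only [Complex.sq_norm]
  field_simp

lemma hypWeight_div_ofReal (a b : ℂ) {r : ℝ} (hr : r ≠ 0) :
    hypWeight (a / r) (b / r) = hypWeight a b := by
  rw [hypWeight, hypWeight, ← sub_div, norm_div, norm_real, Real.norm_eq_abs, div_pow, sq_abs,
    div_ofReal_im, div_ofReal_im]
  field_simp

lemma hypWeight_add_le (t : ℂ) {a b : ℂ} (ha : 0 < a.im) (hb : 0 < b.im) (ht : 0 ≤ t.im) :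
    hypWeight (a + t) (b + t) ≤ hypWeight a b := by
  rw [hypWeight, hypWeight, add_sub_add_right_eq_sub, add_im, add_im]
  gcongr <;> linarith

theorem stmt18_general (M : ℕ) (hM : 2 ≤ M)
    (lam : ℂ) (hlam : 0 < lam.im)
    (zlam : ℂ) (hzlam : 0 < zlam.im)
    (hfix : zlam = -1 / ((M : ℂ) * zlam + lam))
    (z : Fin M → ℂ) (hz : ∀ i, 0 < (z i).im) :
    let w : ℂ → ℝ := fun u => ‖u - zlam‖ ^ 2 / (u.im * zlam.im)
    w (-1 / (∑ i, z i + lam)) ≤ w ((∑ i, z i) / M) := by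
  intro w
  have hM0 : (0 : ℝ) < M := Nat.cast_pos.mpr (by omega)
  have hS : 0 < (∑ i, z i).im := by
    have : NeZero M := ⟨by omega⟩
    rw [im_sum]
    exact Finset.sum_pos (fun i _ => hz i) Finset.univ_nonempty
  have hMz : 0 < ((M : ℂ) * zlam).im := by simpa using mul_pos hM0 hzlam
  calc w (-1 / (∑ i, z i + lam))
      = hypWeight (-1 / (∑ i, z i + lam)) (-1 / ((M : ℂ) * zlam + lam)) := by
        rw [← hfix]; rfl
    _ = hypWeight (∑ i, z i + lam) ((M : ℂ) * zlam + lam) := hypWeight_neg_one_div _ _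
    _ ≤ hypWeight (∑ i, z i) ((M : ℂ) * zlam) := hypWeight_add_le lam hS hMz hlam.le
    _ = hypWeight ((∑ i, z i) / (M : ℝ)) ((M : ℂ) * zlam / (M : ℝ)) :=
        (hypWeight_div_ofReal _ _ hM0.ne').symm
    _ = w ((∑ i, z i) / M) := by
        simp only [ofReal_natCast]
        rw [mul_div_cancel_left₀ _ (by exact_mod_cast hM0.ne')]
        rfl

theorem stmt18 (M : ℕ) (hM : 2 ≤ M) (E : ℝ) (hE0 : 0 < E)
    (hE : E < 2 * Real.sqrt M)
    (lam : ℂ) (hlam : 0 < lam.im) (hre : lam.re ∈ Set.Icc (-E) E)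
    (zlam : ℂ) (hzlam : 0 < zlam.im)
    (hfix : zlam = -1 / ((M : ℂ) * zlam + lam))
    (z : Fin M → ℂ) (hz : ∀ i, 0 < (z i).im) :
    let w : ℂ → ℝ := fun u => ‖u - zlam‖ ^ 2 / (u.im * zlam.im)
    w (-1 / (∑ i, z i + lam)) ≤ w ((∑ i, z i) / M) :=
  stmt18_general M hM lam hlam zlam hzlam hfix z hz
end
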